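/- For even N, the spin-chain operators satisfy the two-boundary Temperley–Lieb loop relation: writing P := e_1 e_3 ⋯ e_{N−1} (the product of e_{2i−1} for 1 ≤ i ≤ N/2; these factors pairwise commute) and Q := e_2 e_4 ⋯ e_{N−2} (the product of e_{2i} for 1 ≤ i ≤ N/2−1; Q := Id when N = 2), one has P b_l Q b_r P = Y · P, where Y = sinh(h(α_l+α_r+1+Θ)/2) · sinh(h(α_l+α_r+1−Θ)/2) / (sinh(hα_l) sinh(hα_r)) and Θ := θ_l − θ_r. -/

import Mathlib

noncomputable section

/-- Basis labels of `(ℂ²)^{⊗N}`: a state (0 = ↑, 1 = ↓) for each of the `N` sites. -/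
abbrev Conf (N : ℕ) := Fin N → Fin 2

def pauliX : Matrix (Fin 2) (Fin 2) ℂ := !![0, 1; 1, 0]
def pauliY : Matrix (Fin 2) (Fin 2) ℂ := !![0, -Complex.I; Complex.I, 0]
def pauliZ : Matrix (Fin 2) (Fin 2) ℂ := !![1, 0; 0, -1]
/-- `σ⁺ = (σˣ + iσʸ)/2`. -/
def pauliP : Matrix (Fin 2) (Fin 2) ℂ := !![0, 1; 0, 0]
/-- `σ⁻ = (σˣ − iσʸ)/2`. -/
def pauliM : Matrix (Fin 2) (Fin 2) ℂ := !![0, 0; 1, 0]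

open Fin.NatCast in
/-- `X_j`: the operator on `(ℂ²)^{⊗N}` acting as the 2×2 matrix `X` on the `j`-th tensor
factor (sites labelled `1,…,N`) and as the identity on the others. -/
def siteOp (N : ℕ) [NeZero N] (X : Matrix (Fin 2) (Fin 2) ℂ) (j : ℕ) :
    Matrix (Conf N) (Conf N) ℂ :=
  Matrix.of fun f g =>
    X (f ((j - 1 : ℕ) : Fin N)) (g ((j - 1 : ℕ) : Fin N)) *
      ∏ k ∈ Finset.univ.erase ((j - 1 : ℕ) : Fin N), if f k = g k then (1 : ℂ) else 0

/-- The Temperley–Lieb generator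
`e_i = −(1/2)(σˣᵢσˣᵢ₊₁ + σʸᵢσʸᵢ₊₁ + cosh(h)(σᶻᵢσᶻᵢ₊₁ − 1) + sinh(h)(σᶻᵢ₊₁ − σᶻᵢ))`. -/
def eOp (N : ℕ) [NeZero N] (h : ℂ) (i : ℕ) : Matrix (Conf N) (Conf N) ℂ :=
  (-(1 / 2 : ℂ)) •
    (siteOp N pauliX i * siteOp N pauliX (i + 1)
      + siteOp N pauliY i * siteOp N pauliY (i + 1)
      + Complex.cosh h • (siteOp N pauliZ i * siteOp N pauliZ (i + 1) - 1)
      + Complex.sinh h • (siteOp N pauliZ (i + 1) - siteOp N pauliZ i))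

/-- The left boundary operator
`b_l = (1/(2 sinh(hα_l)))(i e^{hθ_l} σ⁺₁ + i e^{−hθ_l} σ⁻₁ + cosh(hα_l) σᶻ₁) + (1/2)·Id`. -/
def blobL (N : ℕ) [NeZero N] (h αl θl : ℂ) : Matrix (Conf N) (Conf N) ℂ :=
  (1 / (2 * Complex.sinh (h * αl))) •
    ((Complex.I * Complex.exp (h * θl)) • siteOp N pauliP 1
      + (Complex.I * Complex.exp (-(h * θl))) • siteOp N pauliM 1
      + Complex.cosh (h * αl) • siteOp N pauliZ 1)
  + (1 / 2 : ℂ) • 1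

/-- The right boundary operator
`b_r = −(1/(2 sinh(hα_r)))(i e^{hθ_r} σ⁺_N + i e^{−hθ_r} σ⁻_N + cosh(hα_r) σᶻ_N) + (1/2)·Id`. -/
def blobR (N : ℕ) [NeZero N] (h αr θr : ℂ) : Matrix (Conf N) (Conf N) ℂ :=
  (-(1 / (2 * Complex.sinh (h * αr)))) •
    ((Complex.I * Complex.exp (h * θr)) • siteOp N pauliP N
      + (Complex.I * Complex.exp (-(h * θr))) • siteOp N pauliM N
      + Complex.cosh (h * αr) • siteOp N pauliZ N)
  + (1 / 2 : ℂ) • 1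

/-- `P = e_1 e_3 ⋯ e_{N−1}`, the product of `e_{2i−1}` for `1 ≤ i ≤ N/2`. -/
def Podd (N : ℕ) [NeZero N] (h : ℂ) : Matrix (Conf N) (Conf N) ℂ :=
  ((List.range (N / 2)).map fun i => eOp N h (2 * i + 1)).prod

/-- `Q = e_2 e_4 ⋯ e_{N−2}`, the product of `e_{2i}` for `1 ≤ i ≤ N/2 − 1`
(`Q = Id` when `N = 2`). -/
def Qeven (N : ℕ) [NeZero N] (h : ℂ) : Matrix (Conf N) (Conf N) ℂ :=
  ((List.range (N / 2 - 1)).map fun i => eOp N h (2 * i + 2)).prod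

/-!
Each `e_i` is the rank-one operator `|c⟩⟨c|` on the sites `i, i + 1`, where
`c = e^{h/2} |↑↓⟩ - e^{-h/2} |↓↑⟩` (`cup`; the pairing is bilinear, not Hermitian). Hence
`P = |V⟩⟨V|` for the product `V` of cups on the pairs `(1,2), (3,4), …`, and `P X P = ⟨V|X|V⟩ P`
for every `X`. In `⟨V| b_l Q b_r |V⟩` the cups of `V` and of `Q` link into a single chain through
all `N` sites; it vanishes off the two Néel configurations and equals `±c(a, a + 1)` on the one
starting with spin `a`. What remains is a sum over the boundary spins, which is `Y` by an identity
between exponentials.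
-/

open Matrix Finset Fin.NatCast
open scoped Kronecker

section LocalOperators

variable {ι σ R : Type*}

def KernelDependsOn (K : (ι → σ) → (ι → σ) → R) (S : Finset ι) : Prop :=
  ∀ ⦃f f' g g'⦄, (∀ i ∈ S, f i = f' i) → (∀ i ∈ S, g i = g' i) → K f g = K f' g'

theorem KernelDependsOn.mul [Mul R] [DecidableEq ι] {K L : (ι → σ) → (ι → σ) → R}
    {S T : Finset ι} (hK : KernelDependsOn K S) (hL : KernelDependsOn L T) :
    KernelDependsOn (fun f g => K f g * L f g) (S ∪ T) := fun _ _ _ _ hf hg =>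
  congrArg₂ (· * ·)
    (hK (fun i hi => hf i (mem_union_left T hi)) fun i hi => hg i (mem_union_left T hi))
    (hL (fun i hi => hf i (mem_union_right S hi)) fun i hi => hg i (mem_union_right S hi))

theorem kernelDependsOn_mul_of_dependsOn [Mul R] {u v : (ι → σ) → R} {S : Finset ι}
    (hu : DependsOn u S) (hv : DependsOn v S) : KernelDependsOn (fun f g => u f * v g) S :=
  fun _ _ _ _ hf hg => congrArg₂ (· * ·) (hu hf) (hv hg)

theorem kernelDependsOn_apply_apply (a : ι) (X : Matrix σ σ R) :
    KernelDependsOn (fun f g => X (f a) (g a)) {a} := fun _ _ _ _ hf hg =>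
  congrArg₂ X (hf a (mem_singleton_self a)) (hg a (mem_singleton_self a))

theorem kernelDependsOn_apply_pair [DecidableEq ι] (a b : ι) (M : Matrix (σ × σ) (σ × σ) R) :
    KernelDependsOn (fun f g => M (f a, f b) (g a, g b)) {a, b} := fun _ _ _ _ hf hg => by
  simp only [mem_insert, mem_singleton, forall_eq_or_imp, forall_eq] at hf hg
  exact congrArg₂ M (Prod.ext hf.1 hf.2) (Prod.ext hg.1 hg.2)

variable [Fintype ι] [DecidableEq ι] [DecidableEq σ] [CommRing R]

def localOp (S : Finset ι) (K : (ι → σ) → (ι → σ) → R) : Matrix (ι → σ) (ι → σ) R :=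
  of fun f g => if ∀ i ∉ S, f i = g i then K f g else 0

theorem localOp_apply (S : Finset ι) (K : (ι → σ) → (ι → σ) → R) (f g : ι → σ) :
    localOp S K f g = if ∀ i ∉ S, f i = g i then K f g else 0 :=
  rfl

theorem localOp_empty_one : localOp ∅ (fun _ _ => 1) = (1 : Matrix (ι → σ) (ι → σ) R) := by
  ext f g
  simp [localOp_apply, one_apply, funext_iff]

theorem localOp_univ (K : (ι → σ) → (ι → σ) → R) : localOp univ K = of K := by
  ext f g
  simp [localOp_apply]

theorem localOp_mul [Fintype σ] {S T : Finset ι} {K L : (ι → σ) → (ι → σ) → R}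
    (hST : Disjoint S T) (hK : KernelDependsOn K S) (hL : KernelDependsOn L T) :
    localOp S K * localOp T L = localOp (S ∪ T) fun f g => K f g * L f g := by
  ext f g
  -- the only intermediate configuration that contributes agrees with `g` on `S`, with `f` off `S`
  set u : ι → σ := fun i => if i ∈ S then g i else f i
  have hu : ∀ v, ((∀ i ∉ T, v i = g i) ∧ ∀ i ∉ S, f i = v i) ↔
      v = u ∧ ∀ i ∉ S ∪ T, f i = g i := by
    intro v
    constructor
    · rintro ⟨hvg, hfv⟩
      refine ⟨funext fun i => ?_, fun i hi => ?_⟩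
      · by_cases hiS : i ∈ S
        · simp [u, hiS, hvg i (disjoint_left.mp hST hiS)]
        · simp [u, hiS, hfv i hiS]
      · simp only [mem_union, not_or] at hi
        rw [hfv i hi.1, hvg i hi.2]
    · rintro ⟨rfl, hfg⟩
      refine ⟨fun i hi => ?_, fun i hi => by simp [u, hi]⟩
      by_cases hiS : i ∈ S
      · simp [u, hiS]
      · simp [u, hiS, hfg i (by simp [hiS, hi])]
  have hKu : K f u = K f g := hK (fun _ _ => rfl) fun i hi => by simp [u, hi]
  have hLu : L u g = L f g :=
    hL (fun i hi => by simp [u, disjoint_right.mp hST hi]) fun _ _ => rfl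
  simp only [mul_apply, localOp_apply, ite_mul, mul_ite, zero_mul, mul_zero, ← ite_and]
  simp_rw [hu, ite_and]
  rw [sum_ite_eq' univ u, if_pos (mem_univ u)]
  split_ifs <;> simp [hKu, hLu]

def onSite (a : ι) (X : Matrix σ σ R) : Matrix (ι → σ) (ι → σ) R :=
  localOp {a} fun f g => X (f a) (g a)

def onPair (a b : ι) (M : Matrix (σ × σ) (σ × σ) R) : Matrix (ι → σ) (ι → σ) R :=
  localOp {a, b} fun f g => M (f a, f b) (g a, g b)

theorem onSite_one (a : ι) : (onSite a 1 : Matrix (ι → σ) (ι → σ) R) = 1 := by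
  ext f g
  simp only [onSite, localOp_apply, one_apply, mem_singleton, funext_iff]
  grind

theorem onSite_add (a : ι) (X Y : Matrix σ σ R) :
    onSite a (X + Y) = onSite a X + onSite a Y := by
  ext f g
  simp only [onSite, localOp_apply, Matrix.add_apply]
  split_ifs <;> simp

theorem onSite_smul (a : ι) (c : R) (X : Matrix σ σ R) :
    onSite a (c • X) = c • onSite a X := by
  ext f g
  simp only [onSite, localOp_apply, Matrix.smul_apply]
  split_ifs <;> simp

theorem onPair_add (a b : ι) (M M' : Matrix (σ × σ) (σ × σ) R) :
    onPair a b (M + M') = onPair a b M + onPair a b M' := by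
  ext f g
  simp only [onPair, localOp_apply, Matrix.add_apply]
  split_ifs <;> simp

theorem onPair_sub (a b : ι) (M M' : Matrix (σ × σ) (σ × σ) R) :
    onPair a b (M - M') = onPair a b M - onPair a b M' := by
  ext f g
  simp only [onPair, localOp_apply, Matrix.sub_apply]
  split_ifs <;> simp

theorem onPair_smul (a b : ι) (c : R) (M : Matrix (σ × σ) (σ × σ) R) :
    onPair a b (c • M) = c • onPair a b M := by
  ext f g
  simp only [onPair, localOp_apply, Matrix.smul_apply]
  split_ifs <;> simp

theorem onSite_mul_onSite [Fintype σ] {a b : ι} (hab : a ≠ b) (X Y : Matrix σ σ R) :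
    onSite a X * onSite b Y = onPair a b (X ⊗ₖ Y) := by
  rw [onSite, onSite, localOp_mul (disjoint_singleton.mpr hab) (kernelDependsOn_apply_apply a X)
    (kernelDependsOn_apply_apply b Y)]
  rfl

end LocalOperators

theorem Matrix.vecMulVec_mul_mul_vecMulVec {n α : Type*} [Fintype n] [CommSemiring α]
    (u v : n → α) (M : Matrix n n α) :
    vecMulVec u v * M * vecMulVec u v = (v ⬝ᵥ M *ᵥ u) • vecMulVec u v := by
  rw [vecMulVec_mul, vecMulVec_mul_vecMulVec, vecMulVec_smul, dotProduct_mulVec]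

theorem Finset.prod_range_two_mul_add_one {M : Type*} [CommMonoid M] (F : ℕ → M) (s : ℕ) :
    ∏ j ∈ range (2 * s + 1), F j
      = (∏ i ∈ range (s + 1), F (2 * i)) * ∏ i ∈ range s, F (2 * i + 1) := by
  induction s with
  | zero => simp
  | succ s ih =>
    rw [show 2 * (s + 1) + 1 = 2 * s + 1 + 1 + 1 by ring, prod_range_succ, prod_range_succ, ih,
      prod_range_succ _ (s + 1), prod_range_succ (fun i => F (2 * i + 1)) s,
      show 2 * (s + 1) = 2 * s + 1 + 1 by ring, mul_assoc _ _ (F (2 * s + 1)), mul_right_comm]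

theorem Finset.prod_range_two_mul_add_one_of_mul_succ {M : Type*} [CommMonoid M] {g : ℕ → M}
    {c : M} (hg : ∀ j, g j * g (j + 1) = c) (k : ℕ) :
    ∏ j ∈ range (2 * k + 1), g j = c ^ k * g 0 := by
  rw [prod_range_two_mul_add_one, prod_range_succ', mul_right_comm, ← prod_mul_distrib,
    prod_congr rfl fun j _ => show g (2 * (j + 1)) * g (2 * j + 1) = c from
      (mul_comm _ _).trans (hg (2 * j + 1)),
    prod_const, card_range, mul_zero]

section SpinChain

variable {N : ℕ} [NeZero N]

theorem siteOp_eq_onSite (X : Matrix (Fin 2) (Fin 2) ℂ) (j : ℕ) :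
    siteOp N X j = onSite ((j - 1 : ℕ) : Fin N) X := by
  ext f g
  simp only [siteOp, onSite, localOp_apply, of_apply, prod_boole, mem_erase, mem_univ, and_true,
    mem_singleton]
  split_ifs <;> simp

def cup (h : ℂ) : Matrix (Fin 2) (Fin 2) ℂ :=
  !![0, Complex.exp (h / 2); -Complex.exp (-(h / 2)), 0]

theorem local_tl_generator_eq_vecMulVec_cup (h : ℂ) :
    (-(1 / 2 : ℂ)) • (pauliX ⊗ₖ pauliX + pauliY ⊗ₖ pauliY
      + Complex.cosh h • (pauliZ ⊗ₖ pauliZ - 1) + Complex.sinh h • (1 ⊗ₖ pauliZ - pauliZ ⊗ₖ 1))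
      = vecMulVec (fun p => cup h p.1 p.2) (fun p => cup h p.1 p.2) := by
  have hp : Complex.exp (h / 2) * Complex.exp (h / 2) = Complex.cosh h + Complex.sinh h := by
    rw [← Complex.exp_add, add_halves, Complex.cosh_add_sinh]
  have hm : Complex.exp (-(h / 2)) * Complex.exp (-(h / 2))
      = Complex.cosh h - Complex.sinh h := by
    rw [← Complex.exp_add, ← neg_add, add_halves, Complex.cosh_sub_sinh]
  have hpm : Complex.exp (h / 2) * Complex.exp (-(h / 2)) = 1 := by
    rw [← Complex.exp_add, add_neg_cancel, Complex.exp_zero]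
  ext ⟨x, y⟩ ⟨x', y'⟩
  fin_cases x <;> fin_cases y <;> fin_cases x' <;> fin_cases y' <;>
    simp [vecMulVec_apply, one_apply, pauliX, pauliY, pauliZ, cup]
  exacts [by linear_combination -hp, by linear_combination -hpm, by linear_combination -hpm,
    by linear_combination -hm]

theorem eOp_eq_onPair (h : ℂ) {a : ℕ} (ha : a + 1 < N) :
    eOp N h (a + 1) = onPair (a : Fin N) ((a + 1 : ℕ) : Fin N)
      (vecMulVec (fun p => cup h p.1 p.2) (fun p => cup h p.1 p.2)) := by
  have hab : (a : Fin N) ≠ ((a + 1 : ℕ) : Fin N) := by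
    rw [Ne, Fin.ext_iff, Fin.val_cast_of_lt (by omega), Fin.val_cast_of_lt ha]
    omega
  rw [← local_tl_generator_eq_vecMulVec_cup, ← one_kronecker_one]
  simp only [onPair_smul, onPair_add, onPair_sub, ← onSite_mul_onSite hab, onSite_one, mul_one,
    one_mul, eOp, siteOp_eq_onSite, Nat.add_sub_cancel]

def cupProd (h : ℂ) (c t : ℕ) (f : Conf N) : ℂ :=
  ∏ i ∈ range t, cup h (f ↑(2 * i + c)) (f ↑(2 * i + c + 1))

def siteBlock (c t : ℕ) : Finset (Fin N) :=
  univ.filter fun k => c ≤ (k : ℕ) ∧ (k : ℕ) < 2 * t + c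

theorem dependsOn_cupProd (h : ℂ) (c : ℕ) {t : ℕ} (ht : 2 * t + c ≤ N) :
    DependsOn (cupProd h c t) (siteBlock (N := N) c t : Set (Fin N)) := fun f f' hf => by
  have hmem : ∀ j, c ≤ j → j < 2 * t + c → ((j : ℕ) : Fin N) ∈ siteBlock c t :=
    fun j hcj hj => by simp [siteBlock, Fin.val_cast_of_lt (hj.trans_le ht), hcj, hj]
  refine prod_congr rfl fun i hi => ?_
  rw [mem_range] at hi
  rw [hf _ (hmem _ (by omega) (by omega)), hf _ (hmem _ (by omega) (by omega))]

theorem prod_map_range_eOp (h : ℂ) (c : ℕ) {t : ℕ} (ht : 2 * t + c ≤ N) :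
    ((List.range t).map fun i => eOp N h (2 * i + c + 1)).prod =
      localOp (siteBlock c t) fun f g => cupProd h c t f * cupProd h c t g := by
  induction t with
  | zero =>
    have hempty : siteBlock (N := N) c 0 = ∅ := by
      ext k
      simp only [siteBlock, mem_filter, mem_univ, true_and, notMem_empty, iff_false]
      omega
    simp [cupProd, hempty, ← localOp_empty_one]
  | succ t ih =>
    set A : Fin N := ((2 * t + c : ℕ) : Fin N)
    set B : Fin N := ((2 * t + c + 1 : ℕ) : Fin N)
    have hA : (A : ℕ) = 2 * t + c := Fin.val_cast_of_lt (by omega)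
    have hB : (B : ℕ) = 2 * t + c + 1 := Fin.val_cast_of_lt (by omega)
    have hdisj : Disjoint (siteBlock c t) {A, B} := by
      simp only [disjoint_left, siteBlock, mem_filter, mem_univ, true_and, mem_insert,
        mem_singleton, Fin.ext_iff, hA, hB]
      omega
    rw [List.range_succ, List.map_append, List.prod_append, List.map_singleton,
      List.prod_singleton, ih (by omega), eOp_eq_onPair h (by omega), onPair,
      localOp_mul hdisj (kernelDependsOn_mul_of_dependsOn (dependsOn_cupProd h c (by omega))
        (dependsOn_cupProd h c (by omega))) (kernelDependsOn_apply_pair _ _ _)]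
    congr 1
    · ext k
      simp only [siteBlock, mem_union, mem_filter, mem_univ, true_and, mem_insert, mem_singleton,
        Fin.ext_iff, hA, hB]
      omega
    · ext f g
      simp only [cupProd, prod_range_succ, vecMulVec_apply]
      ring

theorem Podd_eq_vecMulVec (h : ℂ) (hNeven : Even N) :
    Podd N h = vecMulVec (cupProd h 0 (N / 2)) (cupProd h 0 (N / 2)) := by
  have htwo : 2 * (N / 2) = N := Nat.two_mul_div_two_of_even hNeven
  have huniv : siteBlock (N := N) 0 (N / 2) = univ := by
    ext k
    simp [siteBlock, htwo]
  have hprod := prod_map_range_eOp h 0 htwo.le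
  simp only [add_zero] at hprod
  rw [Podd, hprod, huniv, localOp_univ]
  rfl

theorem Qeven_eq_localOp (h : ℂ) (hN : 2 ≤ N) (hNeven : Even N) :
    Qeven N h = localOp (siteBlock 1 (N / 2 - 1))
      fun f g => cupProd h 1 (N / 2 - 1) f * cupProd h 1 (N / 2 - 1) g := by
  have htwo : 2 * (N / 2) = N := Nat.two_mul_div_two_of_even hNeven
  exact prod_map_range_eOp h 1 (by omega)

def blobLMat (h αl θl : ℂ) : Matrix (Fin 2) (Fin 2) ℂ :=
  (1 / (2 * Complex.sinh (h * αl))) •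
    ((Complex.I * Complex.exp (h * θl)) • pauliP + (Complex.I * Complex.exp (-(h * θl))) • pauliM
      + Complex.cosh (h * αl) • pauliZ)
  + (1 / 2 : ℂ) • 1

def blobRMat (h αr θr : ℂ) : Matrix (Fin 2) (Fin 2) ℂ :=
  (-(1 / (2 * Complex.sinh (h * αr)))) •
    ((Complex.I * Complex.exp (h * θr)) • pauliP + (Complex.I * Complex.exp (-(h * θr))) • pauliM
      + Complex.cosh (h * αr) • pauliZ)
  + (1 / 2 : ℂ) • 1

theorem blobL_eq_onSite (h αl θl : ℂ) : blobL N h αl θl = onSite 0 (blobLMat h αl θl) := by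
  simp only [blobL, blobLMat, siteOp_eq_onSite, onSite_add, onSite_smul, onSite_one,
    Nat.sub_self, Nat.cast_zero]

theorem blobR_eq_onSite (h αr θr : ℂ) :
    blobR N h αr θr = onSite ((N - 1 : ℕ) : Fin N) (blobRMat h αr θr) := by
  simp only [blobR, blobRMat, siteOp_eq_onSite, onSite_add, onSite_smul, onSite_one]

theorem blobL_mul_Qeven_mul_blobR (h αl θl αr θr : ℂ) (hN : 2 ≤ N) (hNeven : Even N) :
    blobL N h αl θl * Qeven N h * blobR N h αr θr = of fun f g =>
      blobLMat h αl θl (f 0) (g 0) * (cupProd h 1 (N / 2 - 1) f * cupProd h 1 (N / 2 - 1) g)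
        * blobRMat h αr θr (f ↑(N - 1)) (g ↑(N - 1)) := by
  have htwo : 2 * (N / 2) = N := Nat.two_mul_div_two_of_even hNeven
  have hlast : (((N - 1 : ℕ) : Fin N) : ℕ) = N - 1 := Fin.val_cast_of_lt (by omega)
  have hbulk := dependsOn_cupProd (N := N) h 1 (t := N / 2 - 1) (by omega)
  have hdisj₁ : Disjoint {0} (siteBlock (N := N) 1 (N / 2 - 1)) := by
    simp [siteBlock]
  have hdisj₂ : Disjoint ({0} ∪ siteBlock 1 (N / 2 - 1)) {((N - 1 : ℕ) : Fin N)} := by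
    simp only [disjoint_singleton_right, mem_union, mem_singleton, siteBlock, mem_filter,
      mem_univ, true_and, Fin.ext_iff, hlast, Fin.val_zero]
    omega
  have hcover : {0} ∪ siteBlock 1 (N / 2 - 1) ∪ {((N - 1 : ℕ) : Fin N)} = univ := by
    ext k
    simp only [mem_union, mem_singleton, siteBlock, mem_filter, mem_univ, true_and, Fin.ext_iff,
      hlast, Fin.val_zero, iff_true]
    omega
  rw [blobL_eq_onSite, Qeven_eq_localOp h hN hNeven, blobR_eq_onSite, onSite, onSite,
    localOp_mul hdisj₁ (kernelDependsOn_apply_apply _ _)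
      (kernelDependsOn_mul_of_dependsOn hbulk hbulk),
    localOp_mul hdisj₂ ((kernelDependsOn_apply_apply _ _).mul
      (kernelDependsOn_mul_of_dependsOn hbulk hbulk)) (kernelDependsOn_apply_apply _ _),
    hcover, localOp_univ]

def cupChain (h : ℂ) (f : Conf N) : ℂ :=
  ∏ j ∈ range (N - 1), cup h (f ↑j) (f ↑(j + 1))

theorem cupProd_mul_cupProd (h : ℂ) (hN : 2 ≤ N) (hNeven : Even N) (f : Conf N) :
    cupProd h 0 (N / 2) f * cupProd h 1 (N / 2 - 1) f = cupChain h f := by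
  have htwo : 2 * (N / 2) = N := Nat.two_mul_div_two_of_even hNeven
  rw [cupChain, show N - 1 = 2 * (N / 2 - 1) + 1 by omega, prod_range_two_mul_add_one,
    show N / 2 - 1 + 1 = N / 2 by omega]
  rfl

theorem eq_add_one_of_cup_ne_zero (h : ℂ) {x y : Fin 2} (hxy : cup h x y ≠ 0) : y = x + 1 := by
  fin_cases x <;> fin_cases y <;> simp_all [cup]

theorem cup_mul_cup_add_one (h : ℂ) (x : Fin 2) :
    cup h x (x + 1) * cup h (x + 1) (x + 1 + 1) = -1 := by
  fin_cases x <;> simp [cup, ← Complex.exp_add]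

def neelConf (N : ℕ) (a : Fin 2) : Conf N := fun k => a + ((k : ℕ) : Fin 2)

theorem neelConf_apply_natCast (a : Fin 2) {j : ℕ} (hj : j < N) :
    neelConf N a (j : Fin N) = a + (j : Fin 2) := by
  simp [neelConf, Fin.val_cast_of_lt hj]

theorem neelConf_apply_zero (a : Fin 2) : neelConf N a 0 = a := by
  simp [neelConf]

theorem neelConf_apply_last (hN : 2 ≤ N) (hNeven : Even N) (a : Fin 2) :
    neelConf N a ↑(N - 1) = a + 1 := by
  rw [neelConf_apply_natCast a (by omega)]
  congr 1
  ext
  simp only [Fin.val_natCast, Fin.val_one]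
  have := Nat.even_iff.mp hNeven
  omega

theorem neelConf_injective : Function.Injective (neelConf N) := fun a b hab => by
  simpa [neelConf] using congrFun hab (0 : Fin N)

theorem eq_neelConf_of_cupChain_ne_zero (h : ℂ) {f : Conf N} (hf : cupChain h f ≠ 0) :
    f = neelConf N (f 0) := by
  rw [cupChain, prod_ne_zero_iff] at hf
  have hval : ∀ j < N, f j = f 0 + (j : Fin 2) := by
    intro j hj
    induction j with
    | zero => simp
    | succ j ih =>
      rw [eq_add_one_of_cup_ne_zero h (hf j (mem_range.mpr (by omega))), ih (by omega)]
      push_cast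
      exact add_assoc _ _ _
  funext k
  simpa [neelConf] using hval k k.isLt

theorem sum_cupChain_mul (h : ℂ) (G : Conf N → ℂ) :
    ∑ f, cupChain h f * G f = ∑ a, cupChain h (neelConf N a) * G (neelConf N a) := by
  refine (Fintype.sum_of_injective _ neelConf_injective _ _ (fun f hf => ?_) fun _ => rfl).symm
  by_contra hne
  exact hf ⟨f 0, (eq_neelConf_of_cupChain_ne_zero h (left_ne_zero_of_mul hne)).symm⟩

theorem cupChain_neelConf (h : ℂ) (hN : 2 ≤ N) (hNeven : Even N) (a : Fin 2) :
    cupChain h (neelConf N a) = (-1) ^ (N / 2 - 1) * cup h a (a + 1) := by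
  have htwo : 2 * (N / 2) = N := Nat.two_mul_div_two_of_even hNeven
  have hterm : ∀ j ∈ range (N - 1), cup h (neelConf N a ↑j) (neelConf N a ↑(j + 1))
      = cup h (a + j) (a + j + 1) := fun j hj => by
    rw [mem_range] at hj
    rw [neelConf_apply_natCast a (by omega), neelConf_apply_natCast a (by omega)]
    push_cast
    rw [add_assoc]
  rw [cupChain, prod_congr rfl hterm, show N - 1 = 2 * (N / 2 - 1) + 1 by omega,
    prod_range_two_mul_add_one_of_mul_succ fun j => by
      simpa [add_assoc] using cup_mul_cup_add_one h (a + j)]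
  simp

theorem sum_cup_mul_blobLMat_mul_blobRMat (h αl θl αr θr : ℂ)
    (hαl : Complex.sinh (h * αl) ≠ 0) (hαr : Complex.sinh (h * αr) ≠ 0) :
    ∑ a : Fin 2, ∑ a' : Fin 2, cup h a (a + 1) * cup h a' (a' + 1)
        * blobLMat h αl θl a a' * blobRMat h αr θr (a + 1) (a' + 1)
      = Complex.sinh (h * (αl + αr + 1 + (θl - θr)) / 2)
          * Complex.sinh (h * (αl + αr + 1 - (θl - θr)) / 2)
          / (Complex.sinh (h * αl) * Complex.sinh (h * αr)) := by
  set X := h * (αl + αr + 1 + (θl - θr)) / 2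
  set Y := h * (αl + αr + 1 - (θl - θr)) / 2
  have hXY : Complex.exp X * Complex.exp Y = Complex.exp (h / 2) * Complex.exp (h / 2)
      * Complex.exp (h * αl) * Complex.exp (h * αr) := by
    simp only [X, Y, ← Complex.exp_add]; ring_nf
  have hXY' : Complex.exp (-X) * Complex.exp (-Y) = Complex.exp (-(h / 2))
      * Complex.exp (-(h / 2)) * Complex.exp (-(h * αl)) * Complex.exp (-(h * αr)) := by
    simp only [X, Y, ← Complex.exp_add]; ring_nf
  have hX'Y : Complex.exp X * Complex.exp (-Y)
      = Complex.exp (h * θl) * Complex.exp (-(h * θr)) := by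
    simp only [X, Y, ← Complex.exp_add]; ring_nf
  have hXY'' : Complex.exp (-X) * Complex.exp Y
      = Complex.exp (-(h * θl)) * Complex.exp (h * θr) := by
    simp only [X, Y, ← Complex.exp_add]; ring_nf
  have hpm : Complex.exp (h / 2) * Complex.exp (-(h / 2)) = 1 := by
    rw [← Complex.exp_add, add_neg_cancel, Complex.exp_zero]
  simp only [Fin.sum_univ_two, Fin.isValue, Fin.reduceAdd, cup, blobLMat, blobRMat, pauliP, pauliM,
    pauliZ, of_apply, cons_val', cons_val_fin_one, cons_val_zero, cons_val_one, head_cons, one_div,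
    _root_.mul_inv_rev, smul_of, smul_cons, smul_eq_mul, mul_zero, mul_one, Matrix.smul_empty,
    of_add_of, add_cons, add_zero, tail_cons, empty_add_empty, zero_add, mul_neg, neg_mul,
    Matrix.add_apply, Matrix.smul_apply, neg_smul, neg_of, neg_cons, Matrix.neg_empty, neg_neg,
    one_apply_eq, ne_eq, zero_ne_one, one_ne_zero, not_false_eq_true, one_apply_ne]
  field_simp
  rw [Complex.cosh_add_sinh, Complex.cosh_add_sinh, Complex.I_sq, neg_add_eq_sub, neg_add_eq_sub,
    Complex.sinh_sub_cosh, Complex.sinh_sub_cosh]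
  linear_combination -hXY + hX'Y + hXY'' - hXY'
    - (Complex.exp (h * θl) * Complex.exp (-(h * θr))
      + Complex.exp (-(h * θl)) * Complex.exp (h * θr)) * hpm
    - 2 * Complex.sinh Y * Complex.two_sinh X
    - (Complex.exp X - Complex.exp (-X)) * Complex.two_sinh Y

theorem cupProd_dotProduct_mulVec_eq_sum_cup (h αl θl αr θr : ℂ) (hN : 2 ≤ N)
    (hNeven : Even N) :
    cupProd h 0 (N / 2) ⬝ᵥ (blobL N h αl θl * Qeven N h * blobR N h αr θr) *ᵥ cupProd h 0 (N / 2)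
      = ∑ a : Fin 2, ∑ a' : Fin 2, cup h a (a + 1) * cup h a' (a' + 1)
          * blobLMat h αl θl a a' * blobRMat h αr θr (a + 1) (a' + 1) := by
  have hsign : ((-1 : ℂ) ^ (N / 2 - 1)) * (-1) ^ (N / 2 - 1) = 1 := by
    rw [← mul_pow, neg_one_mul, neg_neg, one_pow]
  calc _ = ∑ f, cupChain h f * ∑ g, cupChain h g
          * (blobLMat h αl θl (f 0) (g 0)
            * blobRMat h αr θr (f ((N - 1 : ℕ) : Fin N)) (g ((N - 1 : ℕ) : Fin N))) := by
        simp only [blobL_mul_Qeven_mul_blobR h αl θl αr θr hN hNeven, dotProduct, mulVec, of_apply,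
          mul_sum, ← cupProd_mul_cupProd h hN hNeven]
        exact sum_congr rfl fun f _ => sum_congr rfl fun g _ => by ring
    _ = _ := by
        simp only [sum_cupChain_mul, cupChain_neelConf h hN hNeven, neelConf_apply_zero,
          neelConf_apply_last hN hNeven]
        simp only [mul_sum]
        refine Fintype.sum_congr _ _ fun a => ?_
        refine Fintype.sum_congr _ _ fun a' => ?_
        linear_combination (cup h a (a + 1) * cup h a' (a' + 1) * blobLMat h αl θl a a'
          * blobRMat h αr θr (a + 1) (a' + 1)) * hsign

end SpinChain

/-- For even `N`, the spin-chain operators satisfy the two-boundary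
Temperley–Lieb loop relation `P b_l Q b_r P = Y · P`, where
`Y = sinh(h(α_l+α_r+1+Θ)/2) sinh(h(α_l+α_r+1−Θ)/2) / (sinh(hα_l) sinh(hα_r))`
and `Θ = θ_l − θ_r`. -/
theorem two_boundary_loop_relation (N : ℕ) [NeZero N] (hN : 2 ≤ N) (hNeven : Even N)
    (h αl θl αr θr : ℂ)
    (hαl : Complex.sinh (h * αl) ≠ 0) (hαr : Complex.sinh (h * αr) ≠ 0) :
    Podd N h * blobL N h αl θl * Qeven N h * blobR N h αr θr * Podd N h
      = (Complex.sinh (h * (αl + αr + 1 + (θl - θr)) / 2)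
          * Complex.sinh (h * (αl + αr + 1 - (θl - θr)) / 2)
          / (Complex.sinh (h * αl) * Complex.sinh (h * αr))) • Podd N h := by
  rw [show Podd N h * blobL N h αl θl * Qeven N h * blobR N h αr θr * Podd N h
      = Podd N h * (blobL N h αl θl * Qeven N h * blobR N h αr θr) * Podd N h by
      simp only [mul_assoc],
    Podd_eq_vecMulVec h hNeven, vecMulVec_mul_mul_vecMulVec,
    cupProd_dotProduct_mulVec_eq_sum_cup h αl θl αr θr hN hNeven,
    sum_cup_mul_blobLMat_mul_blobRMat h αl θl αr θr hαl hαr]
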